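/- The quotient M^B := V^B / V^B·(X₀ - 1) of the group algebra of the free group on X₀, X₁ by the left ideal generated by X₀ - 1 is, as a left module over the subalgebra W^B = k1 ⊕ V^B(X₁-1), free of rank one, generated by the class 1_B of 1. -/

import Mathlib

variable (k : Type) [CommRing k]

/-- `V^B`, the group algebra of the free group on `X₀, X₁`. -/
abbrev VB := MonoidAlgebra k (FreeGroup (Fin 2))

/-- The generators `X₀, X₁` of the free group, inside the group algebra. -/
noncomputable def XB (i : Fin 2) : VB k := MonoidAlgebra.of k (FreeGroup (Fin 2)) (FreeGroup.of i)

/-- `W^B = k·1 ⊕ V^B·(X₁ - 1)`, as a `k`-submodule of `V^B`. -/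
noncomputable def WB : Submodule k (VB k) :=
  Submodule.span k {1} ⊔ LinearMap.range (LinearMap.mulRight k (XB k 1 - 1))

/-- The left ideal `V^B·(X₀ - 1)`. -/
noncomputable def leftIdealX0 : Submodule (VB k) (VB k) :=
  Submodule.span (VB k) {XB k 0 - 1}

/-- `M^B := V^B / V^B (X₀ - 1)`. -/
abbrev MB := VB k ⧸ leftIdealX0 k

namespace Stmt8Aux

abbrev F2 := FreeGroup (Fin 2)

noncomputable def sg (g : F2) : VB k := MonoidAlgebra.single g (1 : k)

/-- Auxiliary section, defined on the reduced word of `g⁻¹`. -/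
noncomputable def TT : List (Fin 2 × Bool) → VB k
  | [] => 1
  | (i, b) :: t =>
    if i = 0 then TT t
    else if b then TT t - sg k ((FreeGroup.mk ((i, b) :: t))⁻¹) * (XB k 1 - 1)
    else sg k ((FreeGroup.mk t)⁻¹) * (XB k 1 - 1) + TT t

noncomputable def SS (g : F2) : VB k := TT k (g⁻¹.toWord)

lemma TT_cons_zero (b : Bool) (t : List (Fin 2 × Bool)) :
    TT k ((0, b) :: t) = TT k t := by simp [TT]

lemma TT_cons_one_true (t : List (Fin 2 × Bool)) :
    TT k (((1 : Fin 2), true) :: t)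
      = TT k t - sg k ((FreeGroup.mk (((1 : Fin 2), true) :: t))⁻¹) * (XB k 1 - 1) := by
  simp only [TT]; norm_num

lemma TT_cons_one_false (t : List (Fin 2 × Bool)) :
    TT k (((1 : Fin 2), false) :: t)
      = sg k ((FreeGroup.mk t)⁻¹) * (XB k 1 - 1) + TT k t := by
  simp only [TT]; norm_num

lemma TT_mem_WB : ∀ ℓ : List (Fin 2 × Bool), TT k ℓ ∈ WB k := by
  intro ℓ
  induction ℓ with
  | nil =>
    exact Submodule.mem_sup_left (Submodule.mem_span_singleton_self _)
  | cons x t ih =>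
    obtain ⟨i, b⟩ := x
    by_cases hi : i = 0
    · simpa [TT, hi] using ih
    · by_cases hb : b = true
      · rw [show TT k ((i, b) :: t)
            = TT k t - sg k ((FreeGroup.mk ((i, b) :: t))⁻¹) * (XB k 1 - 1) by
          simp [TT, hi, hb]]
        exact Submodule.sub_mem _ ih
          (Submodule.mem_sup_right ⟨_, rfl⟩)
      · rw [show TT k ((i, b) :: t)
            = sg k ((FreeGroup.mk t)⁻¹) * (XB k 1 - 1) + TT k t by
          simp [TT, hi, hb]]
        exact Submodule.add_mem _ (Submodule.mem_sup_right ⟨_, rfl⟩) ih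

lemma red_tail {x : Fin 2 × Bool} {t : List (Fin 2 × Bool)}
    (h : FreeGroup.reduce (x :: t) = x :: t) : FreeGroup.reduce t = t := by
  rw [FreeGroup.reduce.cons] at h
  rcases hr : FreeGroup.reduce t with _ | ⟨hd, tl⟩
  · rw [hr] at h
    simpa using (List.cons.injEq .. ▸ h).2.symm
  · rw [hr] at h
    dsimp only at h
    by_cases hc : x.1 = hd.1 ∧ x.2 = !hd.2
    · rw [if_pos hc] at h
      have hlen : tl.length ≤ t.length := by
        have := (FreeGroup.reduce.red (L := t)).length_le
        rw [hr] at this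
        simpa using Nat.le_of_succ_le this
      rw [h] at hlen
      simp at hlen
    · rw [if_neg hc] at h
      exact (List.cons.injEq .. ▸ h).2

lemma toWord_inv_mul (g : F2) (i : Fin 2) (b : Bool) :
    (g * FreeGroup.mk [(i, b)])⁻¹.toWord
      = FreeGroup.reduce ((i, !b) :: g⁻¹.toWord) := by
  have h1 : (FreeGroup.mk [(i, b)])⁻¹ = FreeGroup.mk [(i, !b)] := by
    rw [FreeGroup.inv_mk]; simp [FreeGroup.invRev]
  have : (g * FreeGroup.mk [(i, b)])⁻¹ = FreeGroup.mk ((i, !b) :: g⁻¹.toWord) := by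
    rw [mul_inv_rev, h1]
    conv_lhs => rw [← FreeGroup.mk_toWord (x := g⁻¹)]
    rw [FreeGroup.mul_mk]
    rfl
  rw [this, FreeGroup.toWord_mk]

lemma SS_mul_X0 (g : F2) (b : Bool) :
    SS k (g * FreeGroup.mk [(0, b)]) = SS k g := by
  unfold SS
  rw [toWord_inv_mul, FreeGroup.reduce.cons, FreeGroup.reduce_toWord]
  rcases hℓ : (g⁻¹).toWord with _ | ⟨⟨j, c⟩, t⟩
  · simp [TT_cons_zero]
  · dsimp only
    split
    · next hc =>
      have hj : (0 : Fin 2) = j := by simpa using hc.1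
      rw [← hj, TT_cons_zero]
    · rw [TT_cons_zero]

lemma SS_mul_X1 (g : F2) :
    SS k (g * FreeGroup.of 1) = SS k g + sg k g * (XB k 1 - 1) := by
  have hof : FreeGroup.of (1 : Fin 2) = FreeGroup.mk [((1 : Fin 2), true)] := rfl
  have hg : g = (FreeGroup.mk (g⁻¹.toWord))⁻¹ := by rw [FreeGroup.mk_toWord]; simp
  unfold SS
  rw [hof, toWord_inv_mul, FreeGroup.reduce.cons, FreeGroup.reduce_toWord]
  rcases hℓ : (g⁻¹).toWord with _ | ⟨⟨j, c⟩, t⟩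
  · rw [hℓ] at hg
    have hg1 : g = 1 := by simpa [← FreeGroup.one_eq_mk] using hg
    subst hg1
    show TT k [((1 : Fin 2), !true)] = TT k [] + sg k 1 * (XB k 1 - 1)
    rw [show TT k [((1 : Fin 2), !true)] = TT k (((1 : Fin 2), false) :: []) from rfl,
      TT_cons_one_false]
    rw [show ((FreeGroup.mk ([] : List (Fin 2 × Bool)))⁻¹ : F2) = 1 by rw [show
      (FreeGroup.mk ([] : List (Fin 2 × Bool)) : F2) = 1 from rfl, inv_one]]
    rw [add_comm]
  · rw [hℓ] at hg
    dsimp only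
    split
    · next hc =>
      have hc2' : c = true := by simpa using hc.2
      have hj : j = (1 : Fin 2) := by simpa using (hc.1).symm
      subst hc2' hj
      rw [TT_cons_one_true, ← hg]
      noncomm_ring
    · rw [show ((1 : Fin 2), !true) = ((1 : Fin 2), false) from rfl, TT_cons_one_false, ← hg,
        add_comm]

lemma mem_ideal_mul (v : VB k) : v * (XB k 0 - 1) ∈ leftIdealX0 k := by
  have := Submodule.smul_mem (leftIdealX0 k) v
    (Submodule.subset_span (Set.mem_singleton (XB k 0 - 1)))
  simpa [smul_eq_mul] using this

lemma sg_mul_X (g : F2) (i : Fin 2) :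
    sg k g * XB k i = sg k (g * FreeGroup.of i) := by
  simp [sg, XB, MonoidAlgebra.of_apply, MonoidAlgebra.single_mul_single]

lemma diff_mem (g : F2) :
    sg k (g * FreeGroup.of 0) - sg k g ∈ leftIdealX0 k := by
  rw [← sg_mul_X, show sg k g * XB k 0 - sg k g = sg k g * (XB k 0 - 1) by noncomm_ring]
  exact mem_ideal_mul k _

lemma TT_sub_mem {ℓ : List (Fin 2 × Bool)} (hred : FreeGroup.reduce ℓ = ℓ) :
    TT k ℓ - sg k ((FreeGroup.mk ℓ)⁻¹) ∈ leftIdealX0 k := by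
  induction ℓ with
  | nil =>
    rw [show ((FreeGroup.mk ([] : List (Fin 2 × Bool)))⁻¹ : F2) = 1 by
      rw [show (FreeGroup.mk ([] : List (Fin 2 × Bool)) : F2) = 1 from rfl, inv_one]]
    rw [show TT k [] = 1 from rfl, show sg k (1 : F2) = 1 by
      simp [sg, MonoidAlgebra.one_def], sub_self]
    exact Submodule.zero_mem _
  | cons x t ih =>
    obtain ⟨i, b⟩ := x
    have ht := ih (red_tail hred)
    have hsplit : (FreeGroup.mk ((i, b) :: t))⁻¹
        = (FreeGroup.mk t)⁻¹ * FreeGroup.mk [(i, !b)] := by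
      have h1 : (FreeGroup.mk [(i, b)])⁻¹ = FreeGroup.mk [(i, !b)] := by
        rw [FreeGroup.inv_mk]; simp [FreeGroup.invRev]
      rw [show ((i, b) :: t) = [(i, b)] ++ t from rfl, ← FreeGroup.mul_mk,
        mul_inv_rev, h1]
    by_cases hi : i = 0
    · subst hi
      rw [TT_cons_zero]
      have key : sg k ((FreeGroup.mk t)⁻¹) - sg k ((FreeGroup.mk (((0 : Fin 2), b) :: t))⁻¹)
          ∈ leftIdealX0 k := by
        rw [hsplit]
        cases b with
        | false =>
          rw [show (FreeGroup.mk [((0 : Fin 2), !false)] : F2) = FreeGroup.of 0 from rfl]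
          have := Submodule.neg_mem _ (diff_mem k ((FreeGroup.mk t)⁻¹))
          rwa [neg_sub] at this
        | true =>
          have hginv : (FreeGroup.mk [((0 : Fin 2), !true)] : F2) = (FreeGroup.of 0)⁻¹ := by
            rw [show FreeGroup.of (0 : Fin 2) = FreeGroup.mk [((0 : Fin 2), true)] from rfl,
              FreeGroup.inv_mk]
            simp [FreeGroup.invRev]
          rw [hginv]
          have := diff_mem k ((FreeGroup.mk t)⁻¹ * (FreeGroup.of 0)⁻¹)
          rwa [mul_assoc, inv_mul_cancel, mul_one] at this
      have := Submodule.add_mem _ ht key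
      simpa [sub_add_sub_cancel] using this
    · have hi1 : i = 1 := by omega
      subst hi1
      cases b with
      | false =>
        rw [TT_cons_one_false]
        have hg : (FreeGroup.mk (((1 : Fin 2), false) :: t))⁻¹
            = (FreeGroup.mk t)⁻¹ * FreeGroup.of 1 := by
          rw [hsplit]; rfl
        rw [hg, ← sg_mul_X]
        rw [show sg k ((FreeGroup.mk t)⁻¹) * (XB k 1 - 1) + TT k t
              - sg k ((FreeGroup.mk t)⁻¹) * XB k 1
            = TT k t - sg k ((FreeGroup.mk t)⁻¹) by noncomm_ring]
        exact ht
      | true =>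
        rw [TT_cons_one_true]
        have hginv : (FreeGroup.mk [((1 : Fin 2), !true)] : F2) = (FreeGroup.of 1)⁻¹ := by
          rw [show FreeGroup.of (1 : Fin 2) = FreeGroup.mk [((1 : Fin 2), true)] from rfl,
            FreeGroup.inv_mk]
          simp [FreeGroup.invRev]
        have h2 : (FreeGroup.mk (((1 : Fin 2), true) :: t))⁻¹ * FreeGroup.of 1
            = (FreeGroup.mk t)⁻¹ := by
          rw [hsplit, hginv, mul_assoc, inv_mul_cancel, mul_one]
        rw [show TT k t - sg k ((FreeGroup.mk (((1 : Fin 2), true) :: t))⁻¹) * (XB k 1 - 1)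
              - sg k ((FreeGroup.mk (((1 : Fin 2), true) :: t))⁻¹)
            = TT k t - sg k ((FreeGroup.mk (((1 : Fin 2), true) :: t))⁻¹) * XB k 1 by
          noncomm_ring]
        rw [sg_mul_X, h2]
        exact ht

lemma SS_mem_WB (g : F2) : SS k g ∈ WB k := TT_mem_WB k _

lemma SS_sub_mem (g : F2) : SS k g - sg k g ∈ leftIdealX0 k := by
  have := TT_sub_mem k (ℓ := g⁻¹.toWord) (FreeGroup.reduce_toWord _)
  rwa [FreeGroup.mk_toWord, inv_inv] at this

/-- The retraction `V → V`. -/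
noncomputable def Γ : VB k →ₗ[k] VB k :=
  Finsupp.linearCombination k (fun g => SS k g) ∘ₗ (MonoidAlgebra.coeffLinearEquiv k).toLinearMap

lemma Γ_single (g : F2) (c : k) : Γ k (MonoidAlgebra.single g c) = c • SS k g :=
  by show Finsupp.linearCombination k (fun g => SS k g) (Finsupp.single g c) = _
     exact Finsupp.linearCombination_single k c g

lemma Γ_mul_X0 (v : VB k) : Γ k (v * (XB k 0 - 1)) = 0 := by
  have h : (Γ k).comp (LinearMap.mulRight k (XB k 0 - 1)) = 0 := by
    apply (LinearMap.cancel_right (MonoidAlgebra.coeffLinearEquiv k).symm.surjective).mp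
    apply Finsupp.lhom_ext
    intro a c
    show Γ k ((MonoidAlgebra.single a c : VB k) * (XB k 0 - 1)) = 0
    have hexp : (MonoidAlgebra.single a c : VB k) * (XB k 0 - 1)
        = MonoidAlgebra.single (a * FreeGroup.of 0) c - MonoidAlgebra.single a c := by
      rw [mul_sub, mul_one, XB, MonoidAlgebra.of_apply, MonoidAlgebra.single_mul_single,
        mul_one]
    rw [hexp, map_sub, Γ_single, Γ_single]
    have h0 : a * FreeGroup.of 0 = a * FreeGroup.mk [((0 : Fin 2), true)] := rfl
    rw [h0, SS_mul_X0, sub_self]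
  exact DFunLike.congr_fun h v

lemma Γ_mul_X1 (v : VB k) : Γ k (v * (XB k 1 - 1)) = v * (XB k 1 - 1) := by
  have h : (Γ k).comp (LinearMap.mulRight k (XB k 1 - 1))
      = LinearMap.mulRight k (XB k 1 - 1) := by
    apply (LinearMap.cancel_right (MonoidAlgebra.coeffLinearEquiv k).symm.surjective).mp
    apply Finsupp.lhom_ext
    intro a c
    show Γ k ((MonoidAlgebra.single a c : VB k) * (XB k 1 - 1))
        = (MonoidAlgebra.single a c : VB k) * (XB k 1 - 1)
    have hexp : (MonoidAlgebra.single a c : VB k) * (XB k 1 - 1)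
        = MonoidAlgebra.single (a * FreeGroup.of 1) c - MonoidAlgebra.single a c := by
      rw [mul_sub, mul_one, XB, MonoidAlgebra.of_apply, MonoidAlgebra.single_mul_single,
        mul_one]
    rw [hexp, map_sub, Γ_single, Γ_single, SS_mul_X1, ← hexp]
    have e1 : c • (SS k a + sg k a * (XB k 1 - 1)) - c • SS k a
        = c • (sg k a * (XB k 1 - 1)) := by
      rw [smul_add]; abel
    rw [e1, ← smul_mul_assoc]
    congr 1
    simp [sg, Finsupp.smul_single]
  exact DFunLike.congr_fun h v

lemma Γ_one : Γ k 1 = 1 := by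
  rw [MonoidAlgebra.one_def, Γ_single, one_smul]
  show TT k ((1 : F2)⁻¹).toWord = 1
  rw [inv_one, FreeGroup.toWord_one]
  rfl

lemma Γ_of_WB {w : VB k} (hw : w ∈ WB k) : Γ k w = w := by
  rw [WB] at hw
  obtain ⟨y, hy, z, hz, rfl⟩ := Submodule.mem_sup.mp hw
  obtain ⟨c, rfl⟩ := Submodule.mem_span_singleton.mp hy
  obtain ⟨v, rfl⟩ := hz
  rw [map_add, map_smul, Γ_one]
  show c • (1 : VB k) + Γ k (v * (XB k 1 - 1)) = _
  rw [Γ_mul_X1]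
  rfl

lemma Γ_of_ideal {w : VB k} (hw : w ∈ leftIdealX0 k) : Γ k w = 0 := by
  rw [leftIdealX0] at hw
  obtain ⟨v, rfl⟩ := Submodule.mem_span_singleton.mp hw
  rw [smul_eq_mul]
  exact Γ_mul_X0 k v

end Stmt8Aux

open Stmt8Aux in
/-- `M^B` is a free left `W^B`-module of rank one, generated by the class `1_B`
of `1`: the map `W^B → M^B`, `w ↦ w · 1_B`, is bijective. -/
theorem stmt8 :
    Function.Bijective (fun w : WB k => (Submodule.Quotient.mk (w : VB k) : MB k)) := by
  constructor
  · intro w₁ w₂ h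
    simp only at h
    rw [Submodule.Quotient.eq] at h
    have h1 : Γ k ((w₁ : VB k) - (w₂ : VB k)) = 0 := Γ_of_ideal k h
    rw [map_sub, Γ_of_WB k w₁.2, Γ_of_WB k w₂.2, sub_eq_zero] at h1
    exact Subtype.ext h1
  · -- surjectivity
    intro m
    obtain ⟨v, rfl⟩ := Submodule.Quotient.mk_surjective _ m
    -- the range of the linear map is a submodule containing all mk (single g c)
    let F : WB k →ₗ[k] MB k :=
      ((leftIdealX0 k).mkQ.restrictScalars k).comp (WB k).subtype
    suffices h : (Submodule.Quotient.mk v : MB k) ∈ LinearMap.range F by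
      obtain ⟨w, hw⟩ := h
      exact ⟨w, hw⟩
    induction v using MonoidAlgebra.induction_linear with
    | zero =>
      exact ⟨0, by simp [F]⟩
    | add f g hf hg =>
      obtain ⟨wf, hwf⟩ := hf
      obtain ⟨wg, hwg⟩ := hg
      refine ⟨wf + wg, ?_⟩
      rw [map_add, hwf, hwg]
      rfl
    | single a c =>
      refine ⟨c • ⟨SS k a, SS_mem_WB k a⟩, ?_⟩
      have : F (c • ⟨SS k a, SS_mem_WB k a⟩) = c • (Submodule.Quotient.mk (SS k a) : MB k) :=
        by rw [map_smul]; rfl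
      rw [this]
      have heq : (Submodule.Quotient.mk (SS k a) : MB k)
          = Submodule.Quotient.mk (sg k a) := by
        rw [Submodule.Quotient.eq]
        exact SS_sub_mem k a
      rw [heq, ← Submodule.Quotient.mk_smul]
      congr 1
      simp [sg, Finsupp.smul_single]
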